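/- Let ν be a probability vector on S × A with ν_min := min_{(s,a)} ν(s,a) > 0. Let π be a policy, π̃ another policy, ω ∈ [0,1], π' = (1-ω)π + ωπ̃, Q : S × A → ℝ, χ = ‖H Q − H_{π̃} Q‖∞, and W = (1/2)‖Q − Q^{π}‖_ν². Then ⟨Q − Q^{π}, Q^{π} − Q^{π'}⟩_ν ≤ (8ω/((1−γ)³ √ν_min)) W + ((1−γ)/4) ω ‖Q* − Q^{π}‖∞² + ((1−γ)/4) ω χ². -/

import Mathlib

noncomputable section

/-- A policy assigns to each state a probability distribution over actions. -/
def IsPolicy {S A : Type*} [Fintype A] (π : S → A → ℝ) : Prop :=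
  (∀ s a, 0 ≤ π s a) ∧ ∀ s, ∑ a, π s a = 1

/-- A transition kernel assigns to each state-action pair a probability distribution over states. -/
def IsKernel {S A : Type*} [Fintype S] (p : S → A → S → ℝ) : Prop :=
  (∀ s a s', 0 ≤ p s a s') ∧ ∀ s a, ∑ s', p s a s' = 1

/-- Sup norm on `S × A → ℝ` (functions `S → A → ℝ`). -/
def supNorm {S A : Type*} [Fintype S] [Fintype A] [Nonempty S] [Nonempty A]
    (Q : S → A → ℝ) : ℝ :=
  Finset.univ.sup' Finset.univ_nonempty (fun sa : S × A => |Q sa.1 sa.2|)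

/-- Total variation distance between two distributions on a finite set. -/
def dTV {Ω : Type*} [Fintype Ω] (p₁ p₂ : Ω → ℝ) : ℝ :=
  (∑ x, |p₁ x - p₂ x|) / 2

/-- Weighted ℓ₂ norm with weights ν. -/
def nuNorm {S A : Type*} [Fintype S] [Fintype A] (ν : S → A → ℝ) (Q : S → A → ℝ) : ℝ :=
  Real.sqrt (∑ s, ∑ a, ν s a * (Q s a) ^ 2)

/-- Weighted ℓ₂ inner product with weights ν. -/
def nuInner {S A : Type*} [Fintype S] [Fintype A] (ν : S → A → ℝ) (Q₁ Q₂ : S → A → ℝ) : ℝ :=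
  ∑ s, ∑ a, ν s a * Q₁ s a * Q₂ s a

/-- Bellman operator associated with a policy π. -/
def bellman {S A : Type*} [Fintype S] [Fintype A]
    (p : S → A → S → ℝ) (R : S → A → ℝ) (γ : ℝ) (π : S → A → ℝ)
    (Q : S → A → ℝ) : S → A → ℝ :=
  fun s a => R s a + γ * ∑ s', p s a s' * ∑ a', π s' a' * Q s' a'

/-- Bellman optimality operator. -/
def bellmanOpt {S A : Type*} [Fintype S] [Fintype A] [Nonempty A]
    (p : S → A → S → ℝ) (R : S → A → ℝ) (γ : ℝ)
    (Q : S → A → ℝ) : S → A → ℝ :=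
  fun s a => R s a + γ * ∑ s', p s a s' *
    Finset.univ.sup' Finset.univ_nonempty (fun a' => Q s' a')

/-- Expected operator F̄(Q,π) = (I − D)Q + D H_π Q, where D has diagonal entries μ_b(s)π_b(a|s). -/
def Fbar {S A : Type*} [Fintype S] [Fintype A]
    (p : S → A → S → ℝ) (R : S → A → ℝ) (γ : ℝ)
    (μb : S → ℝ) (πb : S → A → ℝ) (π : S → A → ℝ) (Q : S → A → ℝ) : S → A → ℝ :=
  fun s a => (1 - μb s * πb s a) * Q s a + μb s * πb s a * bellman p R γ π Q s a

/-- Importance-sampling TD operator, for y = ((s₁,a₁),(s₂,a₂)). -/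
def FIS {S A : Type*} [Fintype S] [Fintype A] [DecidableEq S] [DecidableEq A]
    (R : S → A → ℝ) (γ : ℝ) (πb : S → A → ℝ)
    (Q : S → A → ℝ) (y : (S × A) × S × A) (π : S → A → ℝ) : S → A → ℝ :=
  fun s a => if (s, a) = y.1 then
      R y.1.1 y.1.2 + γ * (π y.2.1 y.2.2 / πb y.2.1 y.2.2) * Q y.2.1 y.2.2
    else Q s a

/-- Expected-TD operator, for u = (s₁,a₁,s₂). -/
def FETD {S A : Type*} [Fintype S] [Fintype A] [DecidableEq S] [DecidableEq A]
    (R : S → A → ℝ) (γ : ℝ)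
    (Q : S → A → ℝ) (u : S × A × S) (π : S → A → ℝ) : S → A → ℝ :=
  fun s a => if (s, a) = (u.1, u.2.1) then
      R u.1 u.2.1 + γ * ∑ a', π u.2.2 a' * Q u.2.2 a'
    else Q s a

/-- State transition matrix induced by a policy. -/
def Pmat {S A : Type*} [Fintype A] (p : S → A → S → ℝ) (π : S → A → ℝ) : Matrix S S ℝ :=
  Matrix.of fun s s' => ∑ a, π s a * p s a s'

end

/-!
Cauchy–Schwarz in `ℓ²(ν)` bounds the inner product by `‖Q - Q^π‖_ν · ‖Q^π - Q^π'‖∞`.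
Since `H_π' Q^π - Q^π = ω (H_π̃ Q^π - Q^π)`, the fixed-point perturbation bound for the
`γ`-contraction `H_π'` gives `(1 - γ) ‖Q^π - Q^π'‖∞ ≤ ω ‖H_π̃ Q^π - Q^π‖∞`. Passing through
`H_π̃ Q`, `H Q` and `H Q^π`, the last norm is at most `2γ ‖Q - Q^π‖∞ + χ + ‖Q* - Q^π‖∞`, where
the final term uses `Q^π ≤ H Q^π ≤ H Q* = Q*`. The bound follows from
`√ν_min ‖·‖∞ ≤ ‖·‖_ν` and AM-GM.
-/

open Finset

section WeightedAverage

variable {ι : Type*} [Fintype ι] {w f : ι → ℝ} {c : ℝ}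

lemma sum_mul_le_of_forall_le (hw : ∀ i, 0 ≤ w i) (hw1 : ∑ i, w i = 1) (hf : ∀ i, f i ≤ c) :
    ∑ i, w i * f i ≤ c :=
  calc ∑ i, w i * f i ≤ ∑ i, w i * c :=
        sum_le_sum fun i _ => mul_le_mul_of_nonneg_left (hf i) (hw i)
    _ = c := by rw [← sum_mul, hw1, one_mul]

lemma abs_sum_mul_le_of_forall_abs_le (hw : ∀ i, 0 ≤ w i) (hw1 : ∑ i, w i = 1)
    (hf : ∀ i, |f i| ≤ c) : |∑ i, w i * f i| ≤ c := by
  have hneg := sum_mul_le_of_forall_le hw hw1 (f := fun i => -f i)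
    fun i => neg_le.mpr (neg_le_of_abs_le (hf i))
  simp only [mul_neg, sum_neg_distrib] at hneg
  exact abs_le.mpr ⟨by linarith, sum_mul_le_of_forall_le hw hw1 fun i => le_of_abs_le (hf i)⟩

end WeightedAverage

lemma abs_sup'_sub_sup'_le {ι : Type*} {s : Finset ι} (hs : s.Nonempty) {f g : ι → ℝ} {c : ℝ}
    (h : ∀ i ∈ s, |f i - g i| ≤ c) : |s.sup' hs f - s.sup' hs g| ≤ c := by
  have key : ∀ {f g : ι → ℝ}, (∀ i ∈ s, |f i - g i| ≤ c) → s.sup' hs f ≤ s.sup' hs g + c :=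
    fun {f g} h => sup'_le _ _ fun i hi => by linarith [le_sup' g hi, le_of_abs_le (h i hi)]
  have h₁ := key h
  have h₂ := key fun i hi => abs_sub_comm (f i) (g i) ▸ h i hi
  exact abs_sub_le_iff.mpr ⟨by linarith, by linarith⟩

section PiNorm

variable {S A : Type*} [Fintype S] [Fintype A]

lemma abs_le_norm_apply (Q : S → A → ℝ) (s : S) (a : A) : |Q s a| ≤ ‖Q‖ :=
  (norm_le_pi_norm (Q s) a).trans (norm_le_pi_norm Q s)

lemma norm_le_of_forall_abs_le {Q : S → A → ℝ} {c : ℝ} (hc : 0 ≤ c) (h : ∀ s a, |Q s a| ≤ c) :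
    ‖Q‖ ≤ c :=
  (pi_norm_le_iff_of_nonneg hc).2 fun s => (pi_norm_le_iff_of_nonneg hc).2 (h s)

lemma norm_le_norm_of_nonneg_of_le {f g : S → A → ℝ} (hf : 0 ≤ f) (hfg : f ≤ g) : ‖f‖ ≤ ‖g‖ :=
  norm_le_of_forall_abs_le (norm_nonneg g) fun s a => by
    rw [abs_of_nonneg (hf s a)]
    exact (hfg s a).trans ((le_abs_self _).trans (abs_le_norm_apply g s a))

lemma supNorm_eq_norm [Nonempty S] [Nonempty A] (Q : S → A → ℝ) : supNorm Q = ‖Q‖ := by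
  have hQ : ∀ sa : S × A, sa ∈ univ → |Q sa.1 sa.2| ≤ supNorm Q := fun _ =>
    le_sup' (fun sa : S × A => |Q sa.1 sa.2|)
  refine le_antisymm (sup'_le _ _ fun sa _ => abs_le_norm_apply Q sa.1 sa.2) ?_
  exact norm_le_of_forall_abs_le ((abs_nonneg _).trans (hQ (Classical.arbitrary _) (mem_univ _)))
    fun s a => hQ (s, a) (mem_univ _)

lemma supNorm_sub [Nonempty S] [Nonempty A] (f g : S → A → ℝ) :
    supNorm (fun s a => f s a - g s a) = ‖f - g‖ :=
  supNorm_eq_norm (f - g)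

end PiNorm

section WeightedNorm

variable {S A : Type*} [Fintype S] [Fintype A] {ν : S → A → ℝ}

lemma apply_le_one (hν : ∀ s a, 0 ≤ ν s a) (hν1 : ∑ s, ∑ a, ν s a = 1) (s : S) (a : A) :
    ν s a ≤ 1 := by
  rw [← hν1, ← Fintype.sum_prod_type']
  exact single_le_sum (f := fun sa : S × A => ν sa.1 sa.2) (fun sa _ => hν _ _) (mem_univ (s, a))

lemma nuInner_le_nuNorm_mul_nuNorm (hν : ∀ s a, 0 ≤ ν s a) (f g : S → A → ℝ) :
    nuInner ν f g ≤ nuNorm ν f * nuNorm ν g := by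
  have hsq : ∀ h : S → A → ℝ, 0 ≤ ∑ s, ∑ a, ν s a * h s a ^ 2 := fun h =>
    sum_nonneg fun s _ => sum_nonneg fun a _ => mul_nonneg (hν s a) (sq_nonneg _)
  have hcs : nuInner ν f g ^ 2
      ≤ (∑ s, ∑ a, ν s a * f s a ^ 2) * ∑ s, ∑ a, ν s a * g s a ^ 2 := by
    simp only [nuInner, ← Fintype.sum_prod_type']
    exact sum_sq_le_sum_mul_sum_of_sq_le_mul _
      (fun _ _ => mul_nonneg (hν _ _) (sq_nonneg _)) (fun _ _ => mul_nonneg (hν _ _) (sq_nonneg _))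
      fun _ _ => le_of_eq (by ring)
  rw [nuNorm, nuNorm, ← Real.sqrt_mul (hsq f)]
  exact (le_abs_self _).trans (Real.abs_le_sqrt hcs)

lemma nuNorm_le_norm (hν : ∀ s a, 0 ≤ ν s a) (hν1 : ∑ s, ∑ a, ν s a = 1) (f : S → A → ℝ) :
    nuNorm ν f ≤ ‖f‖ := by
  refine Real.sqrt_le_iff.mpr ⟨norm_nonneg f, ?_⟩
  rw [← Fintype.sum_prod_type'] at hν1 ⊢
  exact sum_mul_le_of_forall_le (fun sa => hν sa.1 sa.2) hν1 fun sa =>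
    sq_abs (f sa.1 sa.2) ▸ pow_le_pow_left₀ (abs_nonneg _) (abs_le_norm_apply f sa.1 sa.2) 2

lemma sqrt_mul_norm_le_nuNorm {m : ℝ} (hm : 0 ≤ m) (hν : ∀ s a, m ≤ ν s a) (f : S → A → ℝ) :
    √m * ‖f‖ ≤ nuNorm ν f := by
  rw [← abs_of_nonneg (Real.sqrt_nonneg m), ← Real.norm_eq_abs, ← norm_smul]
  refine norm_le_of_forall_abs_le (Real.sqrt_nonneg _) fun s a => ?_
  have hterm : m * f s a ^ 2 ≤ ∑ s, ∑ a, ν s a * f s a ^ 2 := by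
    rw [← Fintype.sum_prod_type']
    exact (mul_le_mul_of_nonneg_right (hν s a) (sq_nonneg _)).trans
      (single_le_sum (f := fun sa : S × A => ν sa.1 sa.2 * f sa.1 sa.2 ^ 2)
        (fun sa _ => mul_nonneg (hm.trans (hν _ _)) (sq_nonneg _)) (mem_univ (s, a)))
  calc |(√m • f) s a| = √(m * f s a ^ 2) := by
        rw [Real.sqrt_mul hm, Real.sqrt_sq_eq_abs, Pi.smul_apply, Pi.smul_apply, smul_eq_mul,
          abs_mul, abs_of_nonneg (Real.sqrt_nonneg m)]
    _ ≤ nuNorm ν f := Real.sqrt_le_sqrt hterm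

end WeightedNorm

lemma IsPolicy.mix {S A : Type*} [Fintype A] {π π' : S → A → ℝ} (hπ : IsPolicy π)
    (hπ' : IsPolicy π') {ω : ℝ} (hω : 0 ≤ ω ∧ ω ≤ 1) :
    IsPolicy fun s a => (1 - ω) * π s a + ω * π' s a :=
  ⟨fun s a => add_nonneg (mul_nonneg (by linarith) (hπ.1 s a)) (mul_nonneg hω.1 (hπ'.1 s a)),
    fun s => by rw [sum_add_distrib, ← mul_sum, ← mul_sum, hπ.2 s, hπ'.2 s]; ring⟩

section Bellman

variable {S A : Type*} [Fintype S] [Fintype A] {p : S → A → S → ℝ} {R : S → A → ℝ} {γ : ℝ}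
  {π π' : S → A → ℝ} {ω : ℝ}

def nextValue (p : S → A → S → ℝ) (π : S → A → ℝ) (Q : S → A → ℝ) : S → A → ℝ :=
  fun s a => ∑ s', p s a s' * ∑ a', π s' a' * Q s' a'

lemma nextValue_le (hp : IsKernel p) (hπ : IsPolicy π) {Q : S → A → ℝ} {c : ℝ}
    (h : ∀ s a, Q s a ≤ c) (s : S) (a : A) : nextValue p π Q s a ≤ c :=
  sum_mul_le_of_forall_le (hp.1 s a) (hp.2 s a) fun s' =>
    sum_mul_le_of_forall_le (hπ.1 s') (hπ.2 s') (h s')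

lemma norm_nextValue_le (hp : IsKernel p) (hπ : IsPolicy π) (Q : S → A → ℝ) :
    ‖nextValue p π Q‖ ≤ ‖Q‖ :=
  norm_le_of_forall_abs_le (norm_nonneg Q) fun s a =>
    abs_sum_mul_le_of_forall_abs_le (hp.1 s a) (hp.2 s a) fun s' =>
      abs_sum_mul_le_of_forall_abs_le (hπ.1 s') (hπ.2 s') (abs_le_norm_apply Q s')

lemma bellman_sub_bellman (Q₁ Q₂ : S → A → ℝ) :
    bellman p R γ π Q₁ - bellman p R γ π Q₂ = γ • nextValue p π (Q₁ - Q₂) := by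
  funext s a
  simp only [bellman, nextValue, Pi.sub_apply, Pi.smul_apply, smul_eq_mul, mul_sub,
    sum_sub_distrib]
  ring

lemma norm_bellman_sub_le (hp : IsKernel p) (hπ : IsPolicy π) (hγ : 0 ≤ γ)
    (Q₁ Q₂ : S → A → ℝ) :
    ‖bellman p R γ π Q₁ - bellman p R γ π Q₂‖ ≤ γ * ‖Q₁ - Q₂‖ := by
  rw [bellman_sub_bellman, norm_smul, Real.norm_of_nonneg hγ]
  exact mul_le_mul_of_nonneg_left (norm_nextValue_le hp hπ _) hγ

lemma bellman_contractingWith (hp : IsKernel p) (hπ : IsPolicy π) (hγ₀ : 0 ≤ γ) (hγ₁ : γ < 1) :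
    ContractingWith γ.toNNReal (bellman p R γ π) :=
  ⟨Real.toNNReal_lt_one.mpr hγ₁, LipschitzWith.of_dist_le_mul fun Q₁ Q₂ => by
    simpa only [dist_eq_norm, Real.coe_toNNReal γ hγ₀] using norm_bellman_sub_le hp hπ hγ₀ Q₁ Q₂⟩

lemma one_sub_mul_norm_sub_le_of_isFixedPt (hp : IsKernel p) (hπ : IsPolicy π) (hγ₀ : 0 ≤ γ)
    (hγ₁ : γ < 1) {Qπ : S → A → ℝ} (hQπ : bellman p R γ π Qπ = Qπ) (Q : S → A → ℝ) :
    (1 - γ) * ‖Q - Qπ‖ ≤ ‖bellman p R γ π Q - Q‖ := by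
  have h := (bellman_contractingWith hp hπ hγ₀ hγ₁).dist_le_of_fixedPoint Q hQπ
  rw [Real.coe_toNNReal γ hγ₀, dist_eq_norm, dist_eq_norm, norm_sub_rev Q (bellman p R γ π Q),
    le_div_iff₀ (by linarith), mul_comm] at h
  exact h

lemma le_of_bellman_le [Nonempty S] [Nonempty A] (hp : IsKernel p) (hπ : IsPolicy π)
    (hγ₀ : 0 ≤ γ) (hγ₁ : γ < 1) {Qπ Q : S → A → ℝ} (hQπ : bellman p R γ π Qπ = Qπ)
    (hQ : bellman p R γ π Q ≤ Q) : Qπ ≤ Q := by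
  -- at a maximiser of `Qπ - Q` the gap is at most `γ` times an average of itself
  obtain ⟨⟨s₀, a₀⟩, hmax⟩ := Finite.exists_max fun sa : S × A => Qπ sa.1 sa.2 - Q sa.1 sa.2
  have hstep : Qπ s₀ a₀ - Q s₀ a₀ ≤ γ * nextValue p π (Qπ - Q) s₀ a₀ := by
    have h := congrFun₂ (bellman_sub_bellman (p := p) (R := R) (γ := γ) (π := π) Qπ Q) s₀ a₀
    rw [hQπ] at h
    simp only [Pi.sub_apply, Pi.smul_apply, smul_eq_mul] at h
    linarith [hQ s₀ a₀]
  have hmean := nextValue_le hp hπ (Q := Qπ - Q) (fun s a => hmax (s, a)) s₀ a₀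
  have h₀ : Qπ s₀ a₀ - Q s₀ a₀ ≤ 0 := by nlinarith
  exact fun s a => sub_nonpos.mp ((hmax (s, a)).trans h₀)

lemma bellman_mix (Q : S → A → ℝ) :
    bellman p R γ (fun s a => (1 - ω) * π s a + ω * π' s a) Q
      = (1 - ω) • bellman p R γ π Q + ω • bellman p R γ π' Q := by
  funext s a
  have hmix : ∀ s', ∑ a', ((1 - ω) * π s' a' + ω * π' s' a') * Q s' a'
      = (1 - ω) * ∑ a', π s' a' * Q s' a' + ω * ∑ a', π' s' a' * Q s' a' := fun s' => by
    simp only [add_mul, sum_add_distrib, mul_sum, mul_assoc]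
  simp only [bellman, hmix, Pi.add_apply, Pi.smul_apply, smul_eq_mul, mul_add, sum_add_distrib,
    ← mul_sum, mul_left_comm (p _ _ _)]
  ring

lemma one_sub_mul_norm_sub_le_of_mix (hp : IsKernel p) (hπ : IsPolicy π) (hπ' : IsPolicy π')
    (hω : 0 ≤ ω ∧ ω ≤ 1) (hγ₀ : 0 ≤ γ) (hγ₁ : γ < 1) {Qπ Qmix : S → A → ℝ}
    (hQπ : bellman p R γ π Qπ = Qπ)
    (hQmix : bellman p R γ (fun s a => (1 - ω) * π s a + ω * π' s a) Qmix = Qmix) :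
    (1 - γ) * ‖Qπ - Qmix‖ ≤ ω * ‖bellman p R γ π' Qπ - Qπ‖ := by
  have h := one_sub_mul_norm_sub_le_of_isFixedPt hp (hπ.mix hπ' hω) hγ₀ hγ₁ hQmix Qπ
  rwa [bellman_mix, hQπ, show (1 - ω) • Qπ + ω • bellman p R γ π' Qπ - Qπ
      = ω • (bellman p R γ π' Qπ - Qπ) by module, norm_smul, Real.norm_of_nonneg hω.1] at h

section Optimality

variable [Nonempty A]

lemma bellman_le_bellmanOpt (hp : IsKernel p) (hπ : IsPolicy π) (hγ : 0 ≤ γ) (Q : S → A → ℝ) :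
    bellman p R γ π Q ≤ bellmanOpt p R γ Q := fun s a =>
  add_le_add_right (mul_le_mul_of_nonneg_left (sum_le_sum fun s' _ =>
    mul_le_mul_of_nonneg_left (sum_mul_le_of_forall_le (hπ.1 s') (hπ.2 s') fun a' =>
      le_sup' (fun a' => Q s' a') (mem_univ a')) (hp.1 s a s')) hγ) _

lemma bellmanOpt_mono (hp : IsKernel p) (hγ : 0 ≤ γ) : Monotone (bellmanOpt p R γ) :=
  fun _ _ h s a => add_le_add_right (mul_le_mul_of_nonneg_left (sum_le_sum fun s' _ =>
    mul_le_mul_of_nonneg_left (sup'_mono_fun fun a' _ => h s' a') (hp.1 s a s')) hγ) _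

lemma norm_bellmanOpt_sub_le (hp : IsKernel p) (hγ : 0 ≤ γ) (Q₁ Q₂ : S → A → ℝ) :
    ‖bellmanOpt p R γ Q₁ - bellmanOpt p R γ Q₂‖ ≤ γ * ‖Q₁ - Q₂‖ := by
  refine norm_le_of_forall_abs_le (by positivity) fun s a => ?_
  have h : bellmanOpt p R γ Q₁ s a - bellmanOpt p R γ Q₂ s a
      = γ * ∑ s', p s a s' * (univ.sup' univ_nonempty (fun a' => Q₁ s' a')
          - univ.sup' univ_nonempty (fun a' => Q₂ s' a')) := by
    simp only [bellmanOpt, mul_sub, sum_sub_distrib]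
    ring
  rw [Pi.sub_apply, Pi.sub_apply, h, abs_mul, abs_of_nonneg hγ]
  exact mul_le_mul_of_nonneg_left (abs_sum_mul_le_of_forall_abs_le (hp.1 s a) (hp.2 s a)
    fun s' => abs_sup'_sub_sup'_le _ fun a' _ => abs_le_norm_apply (Q₁ - Q₂) s' a') hγ

end Optimality

end Bellman

section Target

variable {S A : Type*} [Fintype S] [Fintype A] [Nonempty S] [Nonempty A] {p : S → A → S → ℝ}
  {R : S → A → ℝ} {γ : ℝ} {π π' : S → A → ℝ}

lemma norm_bellman_sub_fixedPoint_le (hp : IsKernel p) (hπ : IsPolicy π) (hπ' : IsPolicy π')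
    (hγ₀ : 0 ≤ γ) (hγ₁ : γ < 1) {Qπ Qstar : S → A → ℝ} (hQπ : bellman p R γ π Qπ = Qπ)
    (hQstar : bellmanOpt p R γ Qstar = Qstar) (Q : S → A → ℝ) :
    ‖bellman p R γ π' Qπ - Qπ‖
      ≤ 2 * γ * ‖Q - Qπ‖ + ‖bellmanOpt p R γ Q - bellman p R γ π' Q‖ + ‖Qstar - Qπ‖ := by
  have hπ_le : Qπ ≤ Qstar :=
    le_of_bellman_le hp hπ hγ₀ hγ₁ hQπ ((bellman_le_bellmanOpt hp hπ hγ₀ Qstar).trans hQstar.le)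
  -- `Qπ ≤ H Qπ ≤ H Qstar = Qstar`
  have hgreedy : ‖bellmanOpt p R γ Qπ - Qπ‖ ≤ ‖Qstar - Qπ‖ :=
    norm_le_norm_of_nonneg_of_le
      (sub_nonneg.mpr (hQπ.symm.le.trans (bellman_le_bellmanOpt hp hπ hγ₀ Qπ)))
      (sub_le_sub_right ((bellmanOpt_mono hp hγ₀ hπ_le).trans hQstar.le) Qπ)
  have h₁ := norm_bellman_sub_le (R := R) hp hπ' hγ₀ Qπ Q
  have h₂ := norm_bellmanOpt_sub_le (R := R) hp hγ₀ Q Qπ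
  rw [norm_sub_rev Qπ] at h₁
  calc ‖bellman p R γ π' Qπ - Qπ‖
      ≤ ‖bellman p R γ π' Qπ - bellman p R γ π' Q‖ + ‖bellman p R γ π' Q - bellmanOpt p R γ Q‖
        + ‖bellmanOpt p R γ Q - bellmanOpt p R γ Qπ‖ + ‖bellmanOpt p R γ Qπ - Qπ‖ := by
        simpa only [sub_add_sub_cancel] using norm_add₄_le
          (a := bellman p R γ π' Qπ - bellman p R γ π' Q)
          (b := bellman p R γ π' Q - bellmanOpt p R γ Q)
          (c := bellmanOpt p R γ Q - bellmanOpt p R γ Qπ) (d := bellmanOpt p R γ Qπ - Qπ)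
    _ ≤ _ := by rw [norm_sub_rev (bellman p R γ π' Q)]; linarith

end Target

lemma inner_bound_of_estimates {γ ω r x ξ χ M I E D : ℝ} (hγ₀ : 0 ≤ γ) (hγ₁ : γ < 1)
    (hω : 0 ≤ ω) (hr₀ : 0 < r) (hr₁ : r ≤ 1) (hx : 0 ≤ x) (hξ : r * ξ ≤ x) (hI : I ≤ x * E)
    (hE : (1 - γ) * E ≤ ω * D) (hD : D ≤ 2 * γ * ξ + χ + M) :
    I ≤ 8 * ω / ((1 - γ) ^ 3 * r) * (1 / 2 * x ^ 2)
      + (1 - γ) / 4 * ω * M ^ 2 + (1 - γ) / 4 * ω * χ ^ 2 := by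
  have hγ : 0 < 1 - γ := by linarith
  set t := (1 - γ) ^ 2 * r with ht
  have ht₀ : 0 < t := by positivity
  have hI' : (1 - γ) * I ≤ ω * x * (2 * γ * ξ + χ + M) := calc
    (1 - γ) * I ≤ x * ((1 - γ) * E) := by nlinarith
    _ ≤ x * (ω * D) := mul_le_mul_of_nonneg_left hE hx
    _ ≤ ω * x * (2 * γ * ξ + χ + M) := by nlinarith [mul_nonneg hω hx]
  -- AM-GM in the form `t x y ≤ x² + t² y² / 4`, with `t² ≤ (1-γ)⁴ r` since `r ≤ 1`
  have hamgm : ∀ y, t * (x * y) ≤ x ^ 2 + (1 - γ) ^ 4 * r / 4 * y ^ 2 := fun y => by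
    have : t ^ 2 ≤ (1 - γ) ^ 4 * r := by
      rw [ht, mul_pow, ← pow_mul]
      exact mul_le_mul_of_nonneg_left (by nlinarith) (by positivity)
    nlinarith [sq_nonneg (x - t / 2 * y), sq_nonneg y]
  have hξ' : t * (2 * γ * x * ξ) ≤ 2 * x ^ 2 := by
    have hγ' : γ * (1 - γ) ^ 2 ≤ 1 := by nlinarith
    have : r * (x * ξ) ≤ x ^ 2 := by nlinarith
    nlinarith [mul_nonneg hγ₀ (sq_nonneg (1 - γ))]
  have key : (1 - γ) ^ 3 * r * I
      ≤ 4 * ω * x ^ 2 + (1 - γ) ^ 4 * r / 4 * ω * M ^ 2 + (1 - γ) ^ 4 * r / 4 * ω * χ ^ 2 := by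
    have h₁ : (1 - γ) ^ 3 * r * I ≤ ω * (t * (2 * γ * x * ξ) + t * (x * χ) + t * (x * M)) := by
      nlinarith [mul_le_mul_of_nonneg_left hI' ht₀.le]
    nlinarith [mul_le_mul_of_nonneg_left (add_le_add (add_le_add hξ' (hamgm χ)) (hamgm M)) hω]
  rw [← le_div_iff₀' (by positivity)] at key
  refine key.trans (le_of_eq ?_)
  field_simp
  ring

theorem time_varying_target_bound_general {S A : Type*} [Fintype S] [Fintype A] [Nonempty S] [Nonempty A]
    (p : S → A → S → ℝ) (hp : IsKernel p)
    (R : S → A → ℝ)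
    (γ : ℝ) (hγ : 0 < γ ∧ γ < 1)
    (ν : S → A → ℝ) (hνpos : ∀ s a, 0 < ν s a) (hνsum : ∑ s, ∑ a, ν s a = 1)
    (νmin : ℝ)
    (hνmin : νmin = Finset.univ.inf' Finset.univ_nonempty (fun sa : S × A => ν sa.1 sa.2))
    (π πt : S → A → ℝ) (hπ : IsPolicy π) (hπt : IsPolicy πt)
    (ω : ℝ) (hω : 0 ≤ ω ∧ ω ≤ 1)
    (Q Qstar Qpi Qpi' : S → A → ℝ)
    (hQstar : bellmanOpt p R γ Qstar = Qstar)
    (hQpi : bellman p R γ π Qpi = Qpi)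
    (hQpi' : bellman p R γ (fun s a => (1 - ω) * π s a + ω * πt s a) Qpi' = Qpi')
    (χ : ℝ)
    (hχ : χ = supNorm (fun s a => bellmanOpt p R γ Q s a - bellman p R γ πt Q s a))
    (W : ℝ)
    (hW : W = (1 / 2) * nuNorm ν (fun s a => Q s a - Qpi s a) ^ 2) :
    nuInner ν (fun s a => Q s a - Qpi s a) (fun s a => Qpi s a - Qpi' s a)
      ≤ (8 * ω / ((1 - γ) ^ 3 * Real.sqrt νmin)) * W
        + ((1 - γ) / 4) * ω * supNorm (fun s a => Qstar s a - Qpi s a) ^ 2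
        + ((1 - γ) / 4) * ω * χ ^ 2 := by
  obtain ⟨hγ₀, hγ₁⟩ := hγ
  have hν : ∀ s a, 0 ≤ ν s a := fun s a => (hνpos s a).le
  have hνmin_le : ∀ s a, νmin ≤ ν s a := fun s a =>
    hνmin ▸ inf'_le (fun sa : S × A => ν sa.1 sa.2) (mem_univ (s, a))
  have hνmin_pos : 0 < νmin := hνmin ▸ (lt_inf'_iff _).mpr fun sa _ => hνpos sa.1 sa.2
  have hνmin_le_one : νmin ≤ 1 :=
    (hνmin_le _ _).trans (apply_le_one hν hνsum (Classical.arbitrary S) (Classical.arbitrary A))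
  have hI : nuInner ν (Q - Qpi) (Qpi - Qpi') ≤ nuNorm ν (Q - Qpi) * ‖Qpi - Qpi'‖ :=
    (nuInner_le_nuNorm_mul_nuNorm hν _ _).trans
      (mul_le_mul_of_nonneg_left (nuNorm_le_norm hν hνsum _) (Real.sqrt_nonneg _))
  rw [hW, hχ, supNorm_sub, supNorm_sub]
  exact inner_bound_of_estimates hγ₀.le hγ₁ hω.1 (Real.sqrt_pos.mpr hνmin_pos)
    (Real.sqrt_le_one.mpr hνmin_le_one) (Real.sqrt_nonneg _)
    (sqrt_mul_norm_le_nuNorm hνmin_pos.le hνmin_le (Q - Qpi)) hI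
    (one_sub_mul_norm_sub_le_of_mix hp hπ hπt hω hγ₀.le hγ₁ hQpi hQpi')
    (norm_bellman_sub_fixedPoint_le hp hπ hπt hγ₀.le hγ₁ hQpi hQstar Q)

/-- Bound on the time-varying-target term T₃ (Lemma A.4 / lem:target). -/
theorem time_varying_target_bound {S A : Type*} [Fintype S] [Fintype A] [Nonempty S] [Nonempty A]
    (p : S → A → S → ℝ) (hp : IsKernel p)
    (R : S → A → ℝ) (hR : ∀ s a, 0 ≤ R s a ∧ R s a ≤ 1)
    (γ : ℝ) (hγ : 0 < γ ∧ γ < 1)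
    (ν : S → A → ℝ) (hνpos : ∀ s a, 0 < ν s a) (hνsum : ∑ s, ∑ a, ν s a = 1)
    (νmin : ℝ)
    (hνmin : νmin = Finset.univ.inf' Finset.univ_nonempty (fun sa : S × A => ν sa.1 sa.2))
    (π πt : S → A → ℝ) (hπ : IsPolicy π) (hπt : IsPolicy πt)
    (ω : ℝ) (hω : 0 ≤ ω ∧ ω ≤ 1)
    (Q Qstar Qpi Qpi' : S → A → ℝ)
    (hQstar : bellmanOpt p R γ Qstar = Qstar)
    (hQpi : bellman p R γ π Qpi = Qpi)
    (hQpi' : bellman p R γ (fun s a => (1 - ω) * π s a + ω * πt s a) Qpi' = Qpi')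
    (χ : ℝ)
    (hχ : χ = supNorm (fun s a => bellmanOpt p R γ Q s a - bellman p R γ πt Q s a))
    (W : ℝ)
    (hW : W = (1 / 2) * nuNorm ν (fun s a => Q s a - Qpi s a) ^ 2) :
    nuInner ν (fun s a => Q s a - Qpi s a) (fun s a => Qpi s a - Qpi' s a)
      ≤ (8 * ω / ((1 - γ) ^ 3 * Real.sqrt νmin)) * W
        + ((1 - γ) / 4) * ω * supNorm (fun s a => Qstar s a - Qpi s a) ^ 2
        + ((1 - γ) / 4) * ω * χ ^ 2 :=
  time_varying_target_bound_general p hp R γ hγ ν hνpos hνsum νmin hνmin π πt hπ hπt ω hω Q Qstar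
    Qpi Qpi' hQstar hQpi hQpi' χ hχ W hW
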